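/- arXiv:0903.3072 — 3 statements merged into one kernel-verified Lean document; each statement's English description precedes it below -/
import Mathlib

section
/- If a data point p1 ∈ P is spatially dominated by some point of P, then among all points of P that spatially dominate p1, the point p2 minimizing the sum of distances to all query points is a spatial skyline point (assuming the minimizer is unique). -/
/-! A point dominating `p2` would also dominate `p1` and have a strictly smaller sum of distances
than `p2`, contradicting the minimality of `p2`. -/

def SpatiallyDominates {d : ℕ} (Q : Finset (EuclideanSpace ℝ (Fin d)))
    (a b : EuclideanSpace ℝ (Fin d)) : Prop :=
  (∀ q ∈ Q, dist a q ≤ dist b q) ∧ ∃ q ∈ Q, dist a q < dist b q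

def IsSpatialSkyline {d : ℕ} (P Q : Finset (EuclideanSpace ℝ (Fin d)))
    (p : EuclideanSpace ℝ (Fin d)) : Prop :=
  p ∈ P ∧ ∀ p' ∈ P, p' ≠ p → ¬ SpatiallyDominates Q p' p

namespace SpatiallyDominates

variable {d : ℕ} {Q : Finset (EuclideanSpace ℝ (Fin d))} {a b c : EuclideanSpace ℝ (Fin d)}

theorem trans (hab : SpatiallyDominates Q a b) (hbc : SpatiallyDominates Q b c) :
    SpatiallyDominates Q a c := by
  obtain ⟨q, hq, hlt⟩ := hbc.2
  exact ⟨fun q hq => (hab.1 q hq).trans (hbc.1 q hq), q, hq, (hab.1 q hq).trans_lt hlt⟩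

theorem sum_dist_lt (h : SpatiallyDominates Q a b) :
    ∑ q ∈ Q, dist a q < ∑ q ∈ Q, dist b q :=
  Finset.sum_lt_sum h.1 h.2

end SpatiallyDominates

theorem stmt5_general (d : ℕ) (P Q : Finset (EuclideanSpace ℝ (Fin d)))
    (p1 p2 : EuclideanSpace ℝ (Fin d)) (hp2 : p2 ∈ P)
    (hdom : SpatiallyDominates Q p2 p1)
    (hmin : ∀ p ∈ P, SpatiallyDominates Q p p1 → p ≠ p2 →
      ∑ q ∈ Q, dist p2 q < ∑ q ∈ Q, dist p q) :
    IsSpatialSkyline P Q p2 :=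
  ⟨hp2, fun p hp hne hdom' =>
    (hmin p hp (hdom'.trans hdom) hne).asymm hdom'.sum_dist_lt⟩

theorem stmt5 (d : ℕ) (P Q : Finset (EuclideanSpace ℝ (Fin d))) (hQ : Q.Nonempty)
    (p1 p2 : EuclideanSpace ℝ (Fin d)) (hp1 : p1 ∈ P) (hp2 : p2 ∈ P)
    (hdom : SpatiallyDominates Q p2 p1)
    (hmin : ∀ p ∈ P, SpatiallyDominates Q p p1 → p ≠ p2 →
      ∑ q ∈ Q, dist p2 q < ∑ q ∈ Q, dist p q) :
    IsSpatialSkyline P Q p2 :=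
  stmt5_general d P Q p1 p2 hp2 hdom hmin
end

section
/- A point p ∈ P is spatially dominated by p' ∈ P with respect to Q if and only if p is spatially dominated by p' with respect to the set of extreme points (vertices) of the convex hull of Q, provided every point of Q lies in the convex hull of the extreme points. -/
/-!
The points at least as close to `a` as to `b` form a closed half-space, which is convex. Hence
`dist a q ≤ dist b q` on the vertices `V` propagates to `convexHull ℝ V ⊇ Q`. For the strict
part: if `a` were nowhere strictly closer on `V`, then `dist b v ≤ dist a v` on `V` would
propagate in the same way and contradict strictness at a point of `Q`.
-/

open RealInnerProductSpace

def SpatiallyDominatesSet {d : ℕ} (R : Set (EuclideanSpace ℝ (Fin d)))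
    (a b : EuclideanSpace ℝ (Fin d)) : Prop :=
  (∀ q ∈ R, dist a q ≤ dist b q) ∧ ∃ q ∈ R, dist a q < dist b q

section InnerProductSpace

variable {E : Type*} [NormedAddCommGroup E] [InnerProductSpace ℝ E]

theorem convex_setOf_dist_le_dist (a b : E) : Convex ℝ {x | dist a x ≤ dist b x} := by
  have halfSpace :
      {x : E | dist a x ≤ dist b x} = {x | ⟪b - a, x⟫ ≤ (‖b‖ ^ 2 - ‖a‖ ^ 2) / 2} := by
    ext x
    rw [Set.mem_ofPred_eq, Set.mem_ofPred_eq, dist_eq_norm, dist_eq_norm,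
      ← sq_le_sq₀ (norm_nonneg _) (norm_nonneg _), norm_sub_sq_real, norm_sub_sq_real,
      inner_sub_left]
    constructor <;> intro h <;> linarith
  rw [halfSpace]
  exact convex_halfSpace_le (innerₛₗ ℝ (b - a)).isLinear _

theorem dist_le_dist_of_mem_convexHull {a b x : E} {V : Set E}
    (h : ∀ v ∈ V, dist a v ≤ dist b v) (hx : x ∈ convexHull ℝ V) :
    dist a x ≤ dist b x :=
  convexHull_min h (convex_setOf_dist_le_dist a b) hx

end InnerProductSpace

theorem spatiallyDominatesSet_iff_of_subset_convexHull {d : ℕ}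
    {S V : Set (EuclideanSpace ℝ (Fin d))} {a b : EuclideanSpace ℝ (Fin d)}
    (hVS : V ⊆ S) (hSV : S ⊆ convexHull ℝ V) :
    SpatiallyDominatesSet S a b ↔ SpatiallyDominatesSet V a b := by
  constructor
  · rintro ⟨hle, q, hq, hlt⟩
    refine ⟨fun v hv => hle v (hVS hv), ?_⟩
    by_contra! hge
    exact (dist_le_dist_of_mem_convexHull hge (hSV hq)).not_gt hlt
  · rintro ⟨hle, v, hv, hlt⟩
    exact ⟨fun q hq => dist_le_dist_of_mem_convexHull hle (hSV hq), v, hVS hv, hlt⟩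

theorem stmt8_general (d : ℕ) (Q : Finset (EuclideanSpace ℝ (Fin d)))
    (p p' : EuclideanSpace ℝ (Fin d))
    (V : Set (EuclideanSpace ℝ (Fin d)))
    (hV : V = {q | q ∈ (Q : Set (EuclideanSpace ℝ (Fin d))) ∧
      q ∉ convexHull ℝ ((Q : Set (EuclideanSpace ℝ (Fin d))) \ {q})})
    (hQV : (Q : Set (EuclideanSpace ℝ (Fin d))) ⊆ convexHull ℝ V) :
    SpatiallyDominatesSet (Q : Set (EuclideanSpace ℝ (Fin d))) p' p ↔
      SpatiallyDominatesSet V p' p := by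
  have hVQ : V ⊆ Q := by
    rw [hV]
    exact fun q hq => hq.1
  exact spatiallyDominatesSet_iff_of_subset_convexHull hVQ hQV

theorem stmt8 (d : ℕ) (P Q : Finset (EuclideanSpace ℝ (Fin d)))
    (p p' : EuclideanSpace ℝ (Fin d)) (hp : p ∈ P) (hp' : p' ∈ P)
    (V : Set (EuclideanSpace ℝ (Fin d)))
    (hV : V = {q | q ∈ (Q : Set (EuclideanSpace ℝ (Fin d))) ∧
      q ∉ convexHull ℝ ((Q : Set (EuclideanSpace ℝ (Fin d))) \ {q})})
    (hQV : (Q : Set (EuclideanSpace ℝ (Fin d))) ⊆ convexHull ℝ V) :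
    SpatiallyDominatesSet (Q : Set (EuclideanSpace ℝ (Fin d))) p' p ↔
      SpatiallyDominatesSet V p' p :=
  stmt8_general d Q p p' V hV hQV
end

section
/- If the perpendicular bisector of distinct points p1 and p2 does not intersect the convex hull of Q, then either p1 spatially dominates p2 or p2 spatially dominates p1. -/
/-! The convex hull of `Q` is connected and misses the bisector, so by the intermediate value
theorem one of `dist · p1`, `dist · p2` is strictly smaller than the other on the whole hull,
in particular on `Q`. -/

theorem IsPreconnected.forall_dist_lt_or_forall_dist_gt {X : Type*} [PseudoMetricSpace X]
    {S : Set X} (hS : IsPreconnected S) {p₁ p₂ : X} (h : ∀ x ∈ S, dist x p₁ ≠ dist x p₂) :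
    (∀ x ∈ S, dist x p₁ < dist x p₂) ∨ ∀ x ∈ S, dist x p₂ < dist x p₁ := by
  by_contra! hsign
  obtain ⟨⟨a, ha, ha'⟩, ⟨b, hb, hb'⟩⟩ := hsign
  have hcont (p : X) : ContinuousOn (dist · p) S := (continuous_id.dist continuous_const).continuousOn
  obtain ⟨x, hx, hx'⟩ := hS.intermediate_value₂ hb ha (hcont p₁) (hcont p₂) hb' ha'
  exact h x hx hx'

theorem spatiallyDominates_of_forall_dist_lt {d : ℕ} {Q : Finset (EuclideanSpace ℝ (Fin d))}
    (hQ : Q.Nonempty) {a b : EuclideanSpace ℝ (Fin d)} (h : ∀ q ∈ Q, dist a q < dist b q) :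
    SpatiallyDominates Q a b :=
  ⟨fun q hq => (h q hq).le, hQ.exists_mem.imp fun q hq => ⟨hq, h q hq⟩⟩

theorem stmt16_general (d : ℕ) (Q : Finset (EuclideanSpace ℝ (Fin d))) (hQ : Q.Nonempty)
    (p1 p2 : EuclideanSpace ℝ (Fin d))
    (h : {x : EuclideanSpace ℝ (Fin d) | dist x p1 = dist x p2} ∩
        convexHull ℝ (Q : Set (EuclideanSpace ℝ (Fin d))) = ∅) :
    SpatiallyDominates Q p1 p2 ∨ SpatiallyDominates Q p2 p1 := by
  have hoff : ∀ x ∈ convexHull ℝ (Q : Set (EuclideanSpace ℝ (Fin d))), dist x p1 ≠ dist x p2 :=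
    fun x hx hbis => (Set.eq_empty_iff_forall_notMem.mp h) x ⟨hbis, hx⟩
  have hQ_hull {q} (hq : q ∈ Q) : q ∈ convexHull ℝ (Q : Set (EuclideanSpace ℝ (Fin d))) :=
    subset_convexHull ℝ _ hq
  rcases (convex_convexHull ℝ _).isPreconnected.forall_dist_lt_or_forall_dist_gt hoff with
    h12 | h21
  · exact .inl <| spatiallyDominates_of_forall_dist_lt hQ fun q hq => by
      simpa only [dist_comm] using h12 q (hQ_hull hq)
  · exact .inr <| spatiallyDominates_of_forall_dist_lt hQ fun q hq => by
      simpa only [dist_comm] using h21 q (hQ_hull hq)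

theorem stmt16 (d : ℕ) (Q : Finset (EuclideanSpace ℝ (Fin d))) (hQ : Q.Nonempty)
    (p1 p2 : EuclideanSpace ℝ (Fin d)) (hne : p1 ≠ p2)
    (h : {x : EuclideanSpace ℝ (Fin d) | dist x p1 = dist x p2} ∩
        convexHull ℝ (Q : Set (EuclideanSpace ℝ (Fin d))) = ∅) :
    SpatiallyDominates Q p1 p2 ∨ SpatiallyDominates Q p2 p1 :=
  stmt16_general d Q hQ p1 p2 h
end
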